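/- arXiv:2101.03546 — 2 statements merged into one kernel-verified Lean document; each statement's English description precedes it below -/
import Mathlib

section
/- Let C ⊆ E be a tour in a finite simple graph G = (V, E), and let v₁, v₂, v₃, v₄ ∈ V(C) be four distinct vertices such that all six edges e₁₂ = {v₁,v₂}, e₁₃ = {v₁,v₃}, e₁₄ = {v₁,v₄}, e₂₃ = {v₂,v₃}, e₂₄ = {v₂,v₄}, e₃₄ = {v₃,v₄} belong to E, and such that e₁₂ ∈ C and e₃₄ ∈ C. Then at least one of the two edge sets C' := (C ∖ {e₁₂, e₃₄}) ∪ {e₁₃, e₂₄} and C'' := (C ∖ {e₁₂, e₃₄}) ∪ {e₁₄, e₂₃} is a tour with vertex set V(C). -/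
variable {V : Type*} [Fintype V] [DecidableEq V]

/-- The set of endpoints of the edges of an edge set `C` (the vertices "visited" by `C`). -/
def edgeVerts (C : Finset (Sym2 V)) : Finset V :=
  Finset.univ.filter (fun v => ∃ e ∈ C, v ∈ e)

/-- Two vertices are connected in an edge set `C` if there is a path between them
using only edges of `C`. -/
def ConnIn (C : Finset (Sym2 V)) (u w : V) : Prop :=
  (SimpleGraph.fromEdgeSet (↑C : Set (Sym2 V))).Reachable u w

/-- A tour: an edge set `C ⊆ E(G)` whose induced subgraph is connected and in which every
vertex of `V(C)` has degree exactly `2`. -/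
def IsTour (G : SimpleGraph V) (C : Finset (Sym2 V)) : Prop :=
  (↑C : Set (Sym2 V)) ⊆ G.edgeSet ∧
  (∀ u ∈ edgeVerts C, ∀ w ∈ edgeVerts C, ConnIn C u w) ∧
  (∀ v ∈ edgeVerts C, (C.filter (fun e => v ∈ e)).card = 2)


section TwoOptHelpers
set_option linter.unusedSectionVars false
set_option linter.unusedVariables false
open SimpleGraph Finset

lemma filter_erase_mem {C : Finset (Sym2 V)} {v : V} {e1 e2 : Sym2 V} (h2 : v ∉ e2) :
    (((C.erase e1).erase e2).filter (fun e => v ∈ e)) = (C.filter (fun e => v ∈ e)).erase e1 := by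
  ext e
  simp only [mem_filter, mem_erase]
  constructor
  · rintro ⟨⟨he2, he1, hC⟩, hv⟩; exact ⟨he1, hC, hv⟩
  · rintro ⟨he1, hC, hv⟩; exact ⟨⟨fun h => h2 (h ▸ hv), he1, hC⟩, hv⟩

lemma unique_incident {D : Finset (Sym2 V)} {v : V}
    (h : (D.filter (fun e => v ∈ e)).card ≤ 1) {e f : Sym2 V}
    (he : e ∈ D) (hve : v ∈ e) (hf : f ∈ D) (hvf : v ∈ f) : e = f :=
  Finset.card_le_one.mp h e (mem_filter.mpr ⟨he, hve⟩) f (mem_filter.mpr ⟨hf, hvf⟩)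

open scoped Classical in
lemma degree_fromEdgeSet_eq (D : Finset (Sym2 V)) (hD : ∀ e ∈ D, ¬ e.IsDiag) (v : V) :
    (SimpleGraph.fromEdgeSet (↑D : Set (Sym2 V))).degree v
      = (D.filter (fun e => v ∈ e)).card := by
  show ((SimpleGraph.fromEdgeSet (↑D : Set (Sym2 V))).neighborFinset v).card = _
  apply Finset.card_bij (fun u _ => s(v, u))
  · intro a ha
    rw [mem_neighborFinset, fromEdgeSet_adj] at ha
    exact mem_filter.mpr ⟨by exact_mod_cast ha.1, Sym2.mem_mk_left v a⟩
  · intro a _ b _ h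
    exact Sym2.congr_right.mp h
  · intro e he
    rw [mem_filter] at he
    obtain ⟨heD, hve⟩ := he
    induction e using Sym2.ind with
    | _ p q =>
      have hpq : p ≠ q := fun h => hD _ heD (by simp [Sym2.isDiag_iff_proj_eq, h])
      rcases Sym2.mem_iff.mp hve with rfl | rfl
      · refine ⟨q, ?_, rfl⟩
        rw [mem_neighborFinset, fromEdgeSet_adj]
        exact ⟨by exact_mod_cast heD, hpq⟩
      · refine ⟨p, ?_, Sym2.eq_swap⟩
        rw [mem_neighborFinset, fromEdgeSet_adj]
        refine ⟨by rw [Sym2.eq_swap]; exact_mod_cast heD, fun h => hpq h.symm⟩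

open scoped Classical in
lemma partner (D : Finset (Sym2 V)) (hD : ∀ e ∈ D, ¬ e.IsDiag) {v : V}
    (hdeg : (D.filter (fun e => v ∈ e)).card = 1) :
    ∃ u, u ≠ v ∧ (SimpleGraph.fromEdgeSet (↑D : Set (Sym2 V))).Reachable v u ∧
      Odd ((D.filter (fun e => u ∈ e)).card) := by
  set R := fun a b => (SimpleGraph.fromEdgeSet (↑D : Set (Sym2 V))).Reachable a b with hR
  set D₁ := D.filter (fun e => ∀ a ∈ e, R v a) with hD₁
  have hD₁sub : D₁ ⊆ D := filter_subset _ _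
  have hD₁diag : ∀ e ∈ D₁, ¬ e.IsDiag := fun e he => hD e (hD₁sub he)
  -- edges at a reachable vertex are all in D₁
  have key : ∀ u, R v u → D₁.filter (fun e => u ∈ e) = D.filter (fun e => u ∈ e) := by
    intro u hu
    ext e
    simp only [hD₁, mem_filter]
    constructor
    · rintro ⟨⟨h1, _⟩, h2⟩; exact ⟨h1, h2⟩
    · rintro ⟨h1, h2⟩
      refine ⟨⟨h1, ?_⟩, h2⟩
      intro a ha
      by_cases hau : a = u
      · exact hau ▸ hu
      · have hedge : e = s(u, a) := (Sym2.mem_and_mem_iff (fun h => hau h.symm)).mp ⟨h2, ha⟩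
        refine hu.trans (SimpleGraph.Adj.reachable ?_)
        rw [fromEdgeSet_adj]
        exact ⟨by rw [← hedge]; exact_mod_cast h1, fun h => hau h.symm⟩
  have hzero : ∀ u, ¬ R v u → D₁.filter (fun e => u ∈ e) = ∅ := by
    intro u hu
    rw [Finset.eq_empty_iff_forall_notMem]
    intro e he
    simp only [hD₁, mem_filter, and_assoc] at he
    exact hu (he.2.1 u he.2.2)
  have hdeg1 : Odd ((SimpleGraph.fromEdgeSet (↑D₁ : Set (Sym2 V))).degree v) := by
    rw [degree_fromEdgeSet_eq D₁ hD₁diag, key v (Reachable.refl v), hdeg]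
    exact odd_one
  obtain ⟨u, hne, hodd⟩ :=
    (SimpleGraph.fromEdgeSet (↑D₁ : Set (Sym2 V))).exists_ne_odd_degree_of_exists_odd_degree v hdeg1
  rw [degree_fromEdgeSet_eq D₁ hD₁diag] at hodd
  by_cases hRu : R v u
  · refine ⟨u, hne, hRu, ?_⟩
    rwa [key u hRu] at hodd
  · rw [hzero u hRu] at hodd
    simp at hodd

lemma reach_to_anchor (C : Finset (Sym2 V)) (w x y z : V) {u t : V}
    (p : (SimpleGraph.fromEdgeSet (↑C : Set (Sym2 V))).Walk u t)
    (ht : t = w ∨ t = x ∨ t = y ∨ t = z) :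
    ∃ a, (a = w ∨ a = x ∨ a = y ∨ a = z) ∧
      (SimpleGraph.fromEdgeSet (↑((C.erase s(w,x)).erase s(y,z)) : Set (Sym2 V))).Reachable u a := by
  induction p with
  | nil => exact ⟨_, ht, Reachable.refl _⟩
  | @cons u b t h p ih =>
    obtain ⟨a, ha, hr⟩ := ih ht
    rw [fromEdgeSet_adj] at h
    obtain ⟨hm, hne⟩ := h
    by_cases h1 : s(u, b) = s(w, x)
    · have : u ∈ s(w, x) := h1 ▸ Sym2.mem_mk_left u b
      rw [Sym2.mem_iff] at this
      exact ⟨u, Or.imp id Or.inl this, Reachable.refl u⟩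
    · by_cases h2 : s(u, b) = s(y, z)
      · have : u ∈ s(y, z) := h2 ▸ Sym2.mem_mk_left u b
        rw [Sym2.mem_iff] at this
        exact ⟨u, Or.inr (Or.inr this), Reachable.refl u⟩
      · refine ⟨a, ha, Reachable.trans (SimpleGraph.Adj.reachable ?_) hr⟩
        rw [fromEdgeSet_adj]
        refine ⟨?_, hne⟩
        simp only [Finset.coe_erase, Set.mem_diff, Set.mem_singleton_iff]
        exact ⟨⟨by exact_mod_cast hm, h1⟩, h2⟩


lemma master (G : SimpleGraph V) (C : Finset (Sym2 V)) (hC : IsTour G C)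
    (w x y z : V)
    (hwx : w ≠ x) (hwy : w ≠ y) (hwz : w ≠ z) (hxy : x ≠ y) (hxz : x ≠ z) (hyz : y ≠ z)
    (hvw : w ∈ edgeVerts C) (hvx : x ∈ edgeVerts C)
    (hvy : y ∈ edgeVerts C) (hvz : z ∈ edgeVerts C)
    (hEwz : s(w,z) ∈ G.edgeSet) (hExy : s(x,y) ∈ G.edgeSet)
    (hewx : s(w,x) ∈ C) (heyz : s(y,z) ∈ C)
    (hnwz : s(w,z) ∉ C) (hnxy : s(x,y) ∉ C)
    (hcross :
      (SimpleGraph.fromEdgeSet (↑((C.erase s(w,x)).erase s(y,z)) : Set (Sym2 V))).Reachable w x ∨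
      (SimpleGraph.fromEdgeSet (↑((C.erase s(w,x)).erase s(y,z)) : Set (Sym2 V))).Reachable w y ∨
      (SimpleGraph.fromEdgeSet (↑((C.erase s(w,x)).erase s(y,z)) : Set (Sym2 V))).Reachable z x ∨
      (SimpleGraph.fromEdgeSet (↑((C.erase s(w,x)).erase s(y,z)) : Set (Sym2 V))).Reachable z y) :
    IsTour G (insert s(w,z) (insert s(x,y) ((C.erase s(w,x)).erase s(y,z)))) ∧
    edgeVerts (insert s(w,z) (insert s(x,y) ((C.erase s(w,x)).erase s(y,z)))) = edgeVerts C := by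
  set D := (C.erase s(w,x)).erase s(y,z) with hDdef
  set C2 := insert s(w,z) (insert s(x,y) D) with hC2def
  -- membership facts
  have mwwz : w ∈ s(w,z) := Sym2.mem_mk_left _ _
  have mzwz : z ∈ s(w,z) := Sym2.mem_mk_right _ _
  have mxxy : x ∈ s(x,y) := Sym2.mem_mk_left _ _
  have myxy : y ∈ s(x,y) := Sym2.mem_mk_right _ _
  have mwwx : w ∈ s(w,x) := Sym2.mem_mk_left _ _
  have mxwx : x ∈ s(w,x) := Sym2.mem_mk_right _ _
  have myyz : y ∈ s(y,z) := Sym2.mem_mk_left _ _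
  have mzyz : z ∈ s(y,z) := Sym2.mem_mk_right _ _
  have nwyz : w ∉ s(y,z) := by simp [Sym2.mem_iff, not_or]; exact ⟨hwy, hwz⟩
  have nwxy : w ∉ s(x,y) := by simp [Sym2.mem_iff, not_or]; exact ⟨hwx, hwy⟩
  have nxyz : x ∉ s(y,z) := by simp [Sym2.mem_iff, not_or]; exact ⟨hxy, hxz⟩
  have nxwz : x ∉ s(w,z) := by
    simp [Sym2.mem_iff, not_or]; exact ⟨fun h => hwx h.symm, hxz⟩
  have nywx : y ∉ s(w,x) := by
    simp [Sym2.mem_iff, not_or]; exact ⟨fun h => hwy h.symm, fun h => hxy h.symm⟩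
  have nywz : y ∉ s(w,z) := by
    simp [Sym2.mem_iff, not_or]; exact ⟨fun h => hwy h.symm, fun h => hyz h⟩
  have nzwx : z ∉ s(w,x) := by
    simp [Sym2.mem_iff, not_or]; exact ⟨fun h => hwz h.symm, fun h => hxz h.symm⟩
  have nzxy : z ∉ s(x,y) := by
    simp [Sym2.mem_iff, not_or]; exact ⟨fun h => hxz h.symm, fun h => hyz h.symm⟩
  have hDsub : D ⊆ C := (Finset.erase_subset _ _).trans (Finset.erase_subset _ _)
  have hwzD : s(w,z) ∉ D := fun h => hnwz (hDsub h)
  have hxyD : s(x,y) ∉ D := fun h => hnxy (hDsub h)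
  have hDC2 : D ⊆ C2 := (Finset.subset_insert _ _).trans (Finset.subset_insert _ _)
  -- degree-one facts in D
  have hdw : ((D.filter (fun e => w ∈ e))).card = 1 := by
    rw [hDdef, filter_erase_mem nwyz,
      card_erase_of_mem (mem_filter.mpr ⟨hewx, mwwx⟩), hC.2.2 w hvw]
  have hdx : ((D.filter (fun e => x ∈ e))).card = 1 := by
    rw [hDdef, filter_erase_mem nxyz,
      card_erase_of_mem (mem_filter.mpr ⟨hewx, mxwx⟩), hC.2.2 x hvx]
  have hcomm : D = (C.erase s(y,z)).erase s(w,x) := by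
    rw [hDdef]; ext a; simp only [mem_erase]; tauto
  have hdy : ((D.filter (fun e => y ∈ e))).card = 1 := by
    rw [hcomm, filter_erase_mem nywx,
      card_erase_of_mem (mem_filter.mpr ⟨heyz, myyz⟩), hC.2.2 y hvy]
  have hdz : ((D.filter (fun e => z ∈ e))).card = 1 := by
    rw [hcomm, filter_erase_mem nzwx,
      card_erase_of_mem (mem_filter.mpr ⟨heyz, mzyz⟩), hC.2.2 z hvz]
  -- edgeVerts equality
  have hvw' : ∃ e ∈ C, w ∈ e := by simpa [edgeVerts] using hvw
  have hvx' : ∃ e ∈ C, x ∈ e := by simpa [edgeVerts] using hvx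
  have hvy' : ∃ e ∈ C, y ∈ e := by simpa [edgeVerts] using hvy
  have hvz' : ∃ e ∈ C, z ∈ e := by simpa [edgeVerts] using hvz
  have hEV : edgeVerts C2 = edgeVerts C := by
    ext u
    simp only [edgeVerts, mem_filter, mem_univ, true_and]
    constructor
    · rintro ⟨e, he, hu⟩
      rcases mem_insert.mp he with rfl | he
      · rcases Sym2.mem_iff.mp hu with rfl | rfl
        · exact hvw'
        · exact hvz'
      rcases mem_insert.mp he with rfl | he
      · rcases Sym2.mem_iff.mp hu with rfl | rfl
        · exact hvx'
        · exact hvy'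
      exact ⟨e, hDsub he, hu⟩
    · rintro ⟨e, he, hu⟩
      by_cases h1 : e = s(w,x)
      · subst h1
        rcases Sym2.mem_iff.mp hu with rfl | rfl
        · exact ⟨s(u,z), mem_insert_self _ _, Sym2.mem_mk_left _ _⟩
        · exact ⟨s(u,y), mem_insert_of_mem (mem_insert_self _ _), Sym2.mem_mk_left _ _⟩
      by_cases h2 : e = s(y,z)
      · subst h2
        rcases Sym2.mem_iff.mp hu with rfl | rfl
        · exact ⟨s(x,u), mem_insert_of_mem (mem_insert_self _ _), Sym2.mem_mk_right _ _⟩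
        · exact ⟨s(w,u), mem_insert_self _ _, Sym2.mem_mk_right _ _⟩
      exact ⟨e, hDC2 (by rw [hDdef]; exact mem_erase.mpr ⟨h2, mem_erase.mpr ⟨h1, he⟩⟩), hu⟩
  refine ⟨⟨?_, ?_, ?_⟩, hEV⟩
  · -- subset of edge set
    intro e he
    rw [Finset.mem_coe] at he
    rcases mem_insert.mp he with rfl | he
    · exact hEwz
    rcases mem_insert.mp he with rfl | he
    · exact hExy
    exact hC.1 (Finset.mem_coe.mpr (hDsub he))
  · -- connectivity
    have hmono : SimpleGraph.fromEdgeSet (↑D : Set (Sym2 V))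
        ≤ SimpleGraph.fromEdgeSet (↑C2 : Set (Sym2 V)) :=
      SimpleGraph.fromEdgeSet_mono (by exact_mod_cast hDC2)
    have adjwz : (SimpleGraph.fromEdgeSet (↑C2 : Set (Sym2 V))).Adj w z := by
      rw [fromEdgeSet_adj]
      exact ⟨by exact_mod_cast mem_insert_self _ _, hwz⟩
    have adjxy : (SimpleGraph.fromEdgeSet (↑C2 : Set (Sym2 V))).Adj x y := by
      rw [fromEdgeSet_adj]
      exact ⟨by exact_mod_cast mem_insert_of_mem (mem_insert_self _ _), hxy⟩
    have rwx : (SimpleGraph.fromEdgeSet (↑C2 : Set (Sym2 V))).Reachable w x := by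
      rcases hcross with h | h | h | h
      · exact h.mono hmono
      · exact (h.mono hmono).trans adjxy.symm.reachable
      · exact adjwz.reachable.trans (h.mono hmono)
      · exact adjwz.reachable.trans ((h.mono hmono).trans adjxy.symm.reachable)
    have key : ∀ a, (a = w ∨ a = x ∨ a = y ∨ a = z) →
        (SimpleGraph.fromEdgeSet (↑C2 : Set (Sym2 V))).Reachable w a := by
      rintro a (rfl | rfl | rfl | rfl)
      · exact Reachable.refl _
      · exact rwx
      · exact rwx.trans adjxy.reachable
      · exact adjwz.reachable
    intro u hu t ht
    rw [hEV] at hu ht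
    obtain ⟨pu⟩ := hC.2.1 u hu w hvw
    obtain ⟨pt⟩ := hC.2.1 t ht w hvw
    obtain ⟨a, ha, hra⟩ := reach_to_anchor C w x y z pu (Or.inl rfl)
    obtain ⟨b, hb, hrb⟩ := reach_to_anchor C w x y z pt (Or.inl rfl)
    exact ((hra.mono hmono).trans (key a ha).symm).trans ((key b hb).trans (hrb.mono hmono).symm)
  · -- degrees
    intro v hv
    by_cases hvw2 : v = w
    · subst hvw2
      rw [hC2def, filter_insert, if_pos mwwz, filter_insert, if_neg nwxy,
        card_insert_of_notMem (fun h => hwzD (mem_filter.mp h).1), hdw]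
    by_cases hvx2 : v = x
    · subst hvx2
      rw [hC2def, filter_insert, if_neg nxwz, filter_insert, if_pos mxxy,
        card_insert_of_notMem (fun h => hxyD (mem_filter.mp h).1), hdx]
    by_cases hvy2 : v = y
    · subst hvy2
      rw [hC2def, filter_insert, if_neg nywz, filter_insert, if_pos myxy,
        card_insert_of_notMem (fun h => hxyD (mem_filter.mp h).1), hdy]
    by_cases hvz2 : v = z
    · subst hvz2
      rw [hC2def, filter_insert, if_pos mzwz, filter_insert, if_neg nzxy,
        card_insert_of_notMem (fun h => hwzD (mem_filter.mp h).1), hdz]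
    -- generic vertex
    have nv : ∀ a b : V, a ≠ v → b ≠ v → v ∉ s(a,b) := by
      intro a b ha hb h
      rcases Sym2.mem_iff.mp h with rfl | rfl
      · exact ha rfl
      · exact hb rfl
    have hvC : v ∈ edgeVerts C := hEV ▸ hv
    have hfilter : C2.filter (fun e => v ∈ e) = C.filter (fun e => v ∈ e) := by
      ext e
      simp only [hC2def, hDdef, mem_filter, mem_insert, mem_erase]
      constructor
      · rintro ⟨rfl | rfl | ⟨h2, h1, hc⟩, hu⟩
        · exact absurd hu (nv _ _ (Ne.symm hvw2) (Ne.symm hvz2))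
        · exact absurd hu (nv _ _ (Ne.symm hvx2) (Ne.symm hvy2))
        · exact ⟨hc, hu⟩
      · rintro ⟨hc, hu⟩
        refine ⟨Or.inr (Or.inr ⟨?_, ?_, hc⟩), hu⟩
        · rintro rfl; exact nv _ _ (Ne.symm hvy2) (Ne.symm hvz2) hu
        · rintro rfl; exact nv _ _ (Ne.symm hvw2) (Ne.symm hvx2) hu
    rw [hfilter]
    exact hC.2.2 v hvC

end TwoOptHelpers

section Main
open SimpleGraph Finset
set_option linter.unusedVariables false
/-- If v₁, v₂, v₃, v₄ are four distinct vertices of a tour C, all six connecting edges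
exist in G, and e₁₂, e₃₄ ∈ C, then at least one of the two 2-OPT exchanges
(C ∖ {e₁₂, e₃₄}) ∪ {e₁₃, e₂₄} and (C ∖ {e₁₂, e₃₄}) ∪ {e₁₄, e₂₃} is a tour with vertex
set V(C). -/
theorem tour_two_opt_exchange
    (G : SimpleGraph V) (C : Finset (Sym2 V)) (hC : IsTour G C)
    (v₁ v₂ v₃ v₄ : V)
    (h12 : v₁ ≠ v₂) (h13 : v₁ ≠ v₃) (h14 : v₁ ≠ v₄)
    (h23 : v₂ ≠ v₃) (h24 : v₂ ≠ v₄) (h34 : v₃ ≠ v₄)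
    (hv₁ : v₁ ∈ edgeVerts C) (hv₂ : v₂ ∈ edgeVerts C)
    (hv₃ : v₃ ∈ edgeVerts C) (hv₄ : v₄ ∈ edgeVerts C)
    (hE12 : s(v₁, v₂) ∈ G.edgeSet) (hE13 : s(v₁, v₃) ∈ G.edgeSet)
    (hE14 : s(v₁, v₄) ∈ G.edgeSet) (hE23 : s(v₂, v₃) ∈ G.edgeSet)
    (hE24 : s(v₂, v₄) ∈ G.edgeSet) (hE34 : s(v₃, v₄) ∈ G.edgeSet)
    (he12 : s(v₁, v₂) ∈ C) (he34 : s(v₃, v₄) ∈ C) :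
    (IsTour G (insert s(v₁, v₃) (insert s(v₂, v₄) ((C.erase s(v₁, v₂)).erase s(v₃, v₄)))) ∧
      edgeVerts (insert s(v₁, v₃) (insert s(v₂, v₄) ((C.erase s(v₁, v₂)).erase s(v₃, v₄))))
        = edgeVerts C) ∨
    (IsTour G (insert s(v₁, v₄) (insert s(v₂, v₃) ((C.erase s(v₁, v₂)).erase s(v₃, v₄)))) ∧
      edgeVerts (insert s(v₁, v₄) (insert s(v₂, v₃) ((C.erase s(v₁, v₂)).erase s(v₃, v₄))))
        = edgeVerts C) := by

  classical
  have hswap : s(v₄, v₃) = s(v₃, v₄) := Sym2.eq_swap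
  set D := (C.erase s(v₁, v₂)).erase s(v₃, v₄) with hDdef
  have hD' : (C.erase s(v₁, v₂)).erase s(v₄, v₃) = D := by rw [hswap]
  have hDsub : D ⊆ C := (Finset.erase_subset _ _).trans (Finset.erase_subset _ _)
  have hDdiag : ∀ e ∈ D, ¬ e.IsDiag := fun e he =>
    (G.not_isDiag_of_mem_edgeSet (hC.1 (Finset.mem_coe.mpr (hDsub he))))
  -- membership of simple pairs
  have mem1 : ∀ a b : V, a ∈ s(a, b) := fun a b => Sym2.mem_mk_left a b
  have mem2 : ∀ a b : V, b ∈ s(a, b) := fun a b => Sym2.mem_mk_right a b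
  have nmem : ∀ a b v : V, v ≠ a → v ≠ b → v ∉ s(a, b) := by
    intro a b v ha hb h
    rcases Sym2.mem_iff.mp h with rfl | rfl
    · exact ha rfl
    · exact hb rfl
  have hmemD : ∀ e : Sym2 V, e ≠ s(v₁, v₂) → e ≠ s(v₃, v₄) → (e ∈ D ↔ e ∈ C) := by
    intro e h1 h2
    rw [hDdef, mem_erase, mem_erase]
    tauto
  -- the four candidate edges are distinct from the two removed ones
  have hD13 : s(v₁, v₃) ∈ C → s(v₁, v₃) ∈ D := by
    intro h
    refine (hmemD _ ?_ ?_).mpr h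
    · intro h'; exact h23 (Sym2.congr_right.mp h').symm
    · intro h'
      rcases Sym2.eq_iff.mp h' with ⟨rfl, h''⟩ | ⟨h'', _⟩
      · exact h13 rfl
      · exact h14 h''
  have hD14 : s(v₁, v₄) ∈ C → s(v₁, v₄) ∈ D := by
    intro h
    refine (hmemD _ ?_ ?_).mpr h
    · intro h'; exact h24 (Sym2.congr_right.mp h').symm
    · intro h'
      rcases Sym2.eq_iff.mp h' with ⟨h'', _⟩ | ⟨h'', _⟩
      · exact h13 h''
      · exact h14 h''
  have hD23 : s(v₂, v₃) ∈ C → s(v₂, v₃) ∈ D := by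
    intro h
    refine (hmemD _ ?_ ?_).mpr h
    · intro h'
      rcases Sym2.eq_iff.mp h' with ⟨h'', _⟩ | ⟨_, h''⟩
      · exact h12 h''.symm
      · exact h13 h''.symm
    · intro h'
      rcases Sym2.eq_iff.mp h' with ⟨h'', _⟩ | ⟨h'', _⟩
      · exact h23 h''
      · exact h24 h''
  have hD24 : s(v₂, v₄) ∈ C → s(v₂, v₄) ∈ D := by
    intro h
    refine (hmemD _ ?_ ?_).mpr h
    · intro h'
      rcases Sym2.eq_iff.mp h' with ⟨h'', _⟩ | ⟨_, h''⟩
      · exact h12 h''.symm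
      · exact h14 h''.symm
    · intro h'
      rcases Sym2.eq_iff.mp h' with ⟨h'', _⟩ | ⟨_, h''⟩
      · exact h23 h''
      · exact h34 h''.symm
  -- degree-one facts in D
  have hd1 : ((D.filter (fun e => v₁ ∈ e))).card = 1 := by
    rw [hDdef, filter_erase_mem (nmem _ _ _ h13 h14),
      card_erase_of_mem (mem_filter.mpr ⟨he12, mem1 _ _⟩), hC.2.2 v₁ hv₁]
  have hd2 : ((D.filter (fun e => v₂ ∈ e))).card = 1 := by
    rw [hDdef, filter_erase_mem (nmem _ _ _ h23 h24),
      card_erase_of_mem (mem_filter.mpr ⟨he12, mem2 _ _⟩), hC.2.2 v₂ hv₂]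
  have hcomm : D = (C.erase s(v₃, v₄)).erase s(v₁, v₂) := by
    rw [hDdef]; ext a; simp only [mem_erase]; tauto
  have hd3 : ((D.filter (fun e => v₃ ∈ e))).card = 1 := by
    rw [hcomm, filter_erase_mem (nmem _ _ _ (fun h => h13 h.symm) (fun h => h23 h.symm)),
      card_erase_of_mem (mem_filter.mpr ⟨he34, mem1 _ _⟩), hC.2.2 v₃ hv₃]
  have hd4 : ((D.filter (fun e => v₄ ∈ e))).card = 1 := by
    rw [hcomm, filter_erase_mem (nmem _ _ _ (fun h => h14 h.symm) (fun h => h24 h.symm)),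
      card_erase_of_mem (mem_filter.mpr ⟨he34, mem2 _ _⟩), hC.2.2 v₄ hv₄]
  -- reachability from an edge of D
  have radj : ∀ a b : V, s(a, b) ∈ D → a ≠ b →
      (SimpleGraph.fromEdgeSet (↑D : Set (Sym2 V))).Reachable a b := by
    intro a b h hab
    refine SimpleGraph.Adj.reachable ?_
    rw [fromEdgeSet_adj]
    exact ⟨by exact_mod_cast h, hab⟩
  have he34' : s(v₄, v₃) ∈ C := by rw [hswap]; exact he34
  by_cases hc14 : s(v₁, v₄) ∈ C
  · -- C' works
    have h14D := hD14 hc14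
    have hn13 : s(v₁, v₃) ∉ C := by
      intro hc
      have := unique_incident (le_of_eq hd1) (hD13 hc) (mem1 _ _) h14D (mem1 _ _)
      exact h34 (Sym2.congr_right.mp this)
    have hn24 : s(v₂, v₄) ∉ C := by
      intro hc
      have := unique_incident (le_of_eq hd4) (hD24 hc) (mem2 _ _) h14D (mem2 _ _)
      rcases Sym2.eq_iff.mp this with ⟨h'', _⟩ | ⟨h'', _⟩
      · exact h12 h''.symm
      · exact h24 h''
    left
    rw [← hD']
    exact master G C hC v₁ v₂ v₄ v₃ h12 h14 h13 h24 h23 (fun h => h34 h.symm)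
      hv₁ hv₂ hv₄ hv₃ hE13 hE24 he12 he34' hn13 hn24
      (by rw [hD']; exact Or.inr (Or.inl (radj _ _ h14D h14)))
  by_cases hc23 : s(v₂, v₃) ∈ C
  · -- C' works
    have h23D := hD23 hc23
    have hn13 : s(v₁, v₃) ∉ C := by
      intro hc
      have := unique_incident (le_of_eq hd3) (hD13 hc) (mem2 _ _) h23D (mem2 _ _)
      rcases Sym2.eq_iff.mp this with ⟨h'', _⟩ | ⟨h'', h3⟩
      · exact h12 h''
      · exact h23 h3.symm
    have hn24 : s(v₂, v₄) ∉ C := by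
      intro hc
      have := unique_incident (le_of_eq hd2) (hD24 hc) (mem1 _ _) h23D (mem1 _ _)
      exact h34 (Sym2.congr_right.mp this).symm
    left
    rw [← hD']
    exact master G C hC v₁ v₂ v₄ v₃ h12 h14 h13 h24 h23 (fun h => h34 h.symm)
      hv₁ hv₂ hv₄ hv₃ hE13 hE24 he12 he34' hn13 hn24
      (by rw [hD']; exact Or.inr (Or.inr (Or.inl (radj _ _ h23D h23).symm)))
  by_cases hc13 : s(v₁, v₃) ∈ C
  · -- C'' works
    have h13D := hD13 hc13
    have hn14 : s(v₁, v₄) ∉ C := fun hc => hc14 hc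
    have hn23 : s(v₂, v₃) ∉ C := fun hc => hc23 hc
    right
    rw [hDdef]
    exact master G C hC v₁ v₂ v₃ v₄ h12 h13 h14 h23 h24 h34
      hv₁ hv₂ hv₃ hv₄ hE14 hE23 he12 he34 hn14 hn23
      (Or.inr (Or.inl (radj _ _ h13D h13)))
  by_cases hc24 : s(v₂, v₄) ∈ C
  · -- C'' works
    have h24D := hD24 hc24
    right
    rw [hDdef]
    exact master G C hC v₁ v₂ v₃ v₄ h12 h13 h14 h23 h24 h34
      hv₁ hv₂ hv₃ hv₄ hE14 hE23 he12 he34 hc14 hc23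
      (Or.inr (Or.inr (Or.inl (radj _ _ h24D h24).symm)))
  -- all four candidate edges absent
  obtain ⟨p, hp1, hpR, hpodd⟩ := partner D hDdiag hd1
  have hodd_mem : p = v₁ ∨ p = v₂ ∨ p = v₃ ∨ p = v₄ := by
    by_contra hcon
    push_neg at hcon
    obtain ⟨n1, n2, n3, n4⟩ := hcon
    have heq : D.filter (fun e => p ∈ e) = C.filter (fun e => p ∈ e) := by
      ext e
      simp only [hDdef, mem_filter, mem_erase]
      constructor
      · rintro ⟨⟨_, _, h⟩, hu⟩; exact ⟨h, hu⟩
      · rintro ⟨h, hu⟩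
        refine ⟨⟨?_, ?_, h⟩, hu⟩
        · rintro rfl; exact nmem _ _ _ n3 n4 hu
        · rintro rfl; exact nmem _ _ _ n1 n2 hu
    rw [heq] at hpodd
    by_cases hu : p ∈ edgeVerts C
    · rw [hC.2.2 p hu] at hpodd
      norm_num [Nat.odd_iff] at hpodd
    · have hem : C.filter (fun e => p ∈ e) = ∅ := by
        rw [Finset.eq_empty_iff_forall_notMem]
        intro e he
        rw [mem_filter] at he
        exact hu (mem_filter.mpr ⟨mem_univ p, ⟨e, he.1, he.2⟩⟩)
      rw [hem] at hpodd
      norm_num [Nat.odd_iff] at hpodd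
  rcases hodd_mem with h | h | h | h <;> rw [h] at hpR
  · exact absurd h hp1
  · -- Rd v₁ v₂ : C'' works
    right
    rw [hDdef]
    exact master G C hC v₁ v₂ v₃ v₄ h12 h13 h14 h23 h24 h34
      hv₁ hv₂ hv₃ hv₄ hE14 hE23 he12 he34 hc14 hc23
      (Or.inl hpR)
  · -- Rd v₁ v₃ : C'' works
    right
    rw [hDdef]
    exact master G C hC v₁ v₂ v₃ v₄ h12 h13 h14 h23 h24 h34
      hv₁ hv₂ hv₃ hv₄ hE14 hE23 he12 he34 hc14 hc23
      (Or.inr (Or.inl hpR))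
  · -- Rd v₁ v₄ : C' works
    left
    rw [← hD']
    exact master G C hC v₁ v₂ v₄ v₃ h12 h14 h13 h24 h23 (fun h => h34 h.symm)
      hv₁ hv₂ hv₄ hv₃ hE13 hE24 he12 he34' hc13 hc24
      (by rw [hD']; exact Or.inr (Or.inl hpR))

end Main
end

section
/- Let G = (V, E) be a finite simple graph with nonnegative edge costs ℓ : E → ℝ. Let C ⊆ E be a tour and let v₁, v₂, v₃, v₄ ∈ V(C) be four distinct vertices such that all six edges e₁₂, e₁₃, e₁₄, e₂₃, e₂₄, e₃₄ connecting them belong to E, with ℓ(e₁₂) + ℓ(e₃₄) > ℓ(e₁₃) + ℓ(e₂₄) and ℓ(e₁₂) + ℓ(e₃₄) > ℓ(e₂₃) + ℓ(e₁₄). If e₁₂ ∈ C and e₃₄ ∈ C, then there exists a tour C' with V(C') = V(C), with cost(C') < cost(C), not containing both e₁₂ and e₃₄, and such that C ∖ {e₁₂, e₁₃, e₁₄, e₂₃, e₂₄, e₃₄} = C' ∖ {e₁₂, e₁₃, e₁₄, e₂₃, e₂₄, e₃₄}. -/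
variable {V : Type*} [Fintype V] [DecidableEq V]

/-!
Delete `v₁v₂` and `v₃v₄` from the tour `C` and call the rest `D`. The odd-degree vertices of `D`
are exactly `v₁, v₂, v₃, v₄`, and `v₁`, `v₂` lie in different components of `D`: a `D`-path from
`v₁` to `v₂` closes up with `v₁v₂` to a cycle in the 2-regular graph `C`, which must then be a
whole component of `C` and so contain the edge `v₃v₄ ∉ D`. Each component has an even number of
odd-degree vertices, so `v₁` is joined in `D` to exactly one of `v₃`, `v₄`, say `v₃`. Then
`D + v₁v₄ + v₂v₃` has the same degrees as `C` and is connected, i.e. it is a cheaper tour.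
-/

open SimpleGraph Finset

section EdgeSets

variable {α : Type*}

lemma insert_insert_sdiff_pair [DecidableEq α] {C : Finset α} {e f : α} (he : e ∈ C)
    (hf : f ∈ C) : insert e (insert f (C \ {e, f})) = C := by
  ext x
  by_cases hxe : x = e <;> by_cases hxf : x = f <;> simp [hxe, hxf, he, hf]

lemma card_filter_mem_insert [DecidableEq α] {D : Finset (Sym2 α)} {e : Sym2 α} (he : e ∉ D)
    (v : α) : #{f ∈ insert e D | v ∈ f} = #{f ∈ D | v ∈ f} + if v ∈ e then 1 else 0 := by
  rw [filter_insert]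
  split_ifs
  · rw [card_insert_of_notMem (fun h => he (mem_filter.mp h).1)]
  · rfl

lemma card_filter_mem_insert_insert [DecidableEq α] {D : Finset (Sym2 α)} {e f : Sym2 α}
    (he : e ∉ insert f D) (hf : f ∉ D) (v : α) :
    #{x ∈ insert e (insert f D) | v ∈ x} =
      #{x ∈ D | v ∈ x} + ((if v ∈ e then 1 else 0) + if v ∈ f then 1 else 0) := by
  rw [card_filter_mem_insert he, card_filter_mem_insert hf]
  ring

lemma degree_fromEdgeSet [DecidableEq α] {D : Finset (Sym2 α)} (hD : ∀ e ∈ D, ¬ e.IsDiag)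
    (v : α) [Fintype ((fromEdgeSet (D : Set (Sym2 α))).neighborSet v)] :
    (fromEdgeSet (D : Set (Sym2 α))).degree v = #{e ∈ D | v ∈ e} := by
  rw [← card_incidenceFinset_eq_degree]
  congr 1
  ext e
  simp only [mem_incidenceFinset, incidenceSet, edgeSet_fromEdgeSet, mem_filter]
  exact ⟨fun h => ⟨h.1.1, h.2⟩, fun h => ⟨⟨h.1, hD e h.1⟩, h.2⟩⟩

lemma connIn_of_mem {C : Finset (Sym2 α)} {u w : α} (h : s(u, w) ∈ C) (hne : u ≠ w) :
    ConnIn C u w :=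
  ((fromEdgeSet_adj _).mpr ⟨h, hne⟩).reachable

lemma ConnIn.symm {C : Finset (Sym2 α)} {u w : α} (h : ConnIn C u w) : ConnIn C w u :=
  Reachable.symm h

lemma ConnIn.trans {C : Finset (Sym2 α)} {u w x : α} (h : ConnIn C u w) (h' : ConnIn C w x) :
    ConnIn C u x :=
  Reachable.trans h h'

lemma ConnIn.of_forall_mem {C C' : Finset (Sym2 α)} (hC : ∀ x y, s(x, y) ∈ C → ConnIn C' x y)
    {u w : α} (h : ConnIn C u w) : ConnIn C' u w := by
  obtain ⟨p⟩ := h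
  induction p with
  | nil => exact Reachable.refl _
  | cons hadj _ ih => exact (hC _ _ ((fromEdgeSet_adj _).mp hadj).1).trans ih

def twoOptMove [DecidableEq α] (C : Finset (Sym2 α)) (a b c d : α) : Finset (Sym2 α) :=
  insert s(a, d) (insert s(b, c) (C \ {s(a, b), s(c, d)}))

variable [DecidableEq α] {C : Finset (Sym2 α)} {a b c d : α}

lemma card_filter_mem_twoOptMove (habC : s(a, b) ∈ C) (hcdC : s(c, d) ∈ C)
    (hab : a ≠ b) (hac : a ≠ c) (had : a ≠ d) (hbc : b ≠ c) (hcd : c ≠ d)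
    (hadD : s(a, d) ∉ C \ {s(a, b), s(c, d)}) (hbcD : s(b, c) ∉ C \ {s(a, b), s(c, d)})
    (v : α) : #{e ∈ twoOptMove C a b c d | v ∈ e} = #{e ∈ C | v ∈ e} := by
  conv_rhs => rw [← insert_insert_sdiff_pair habC hcdC]
  rw [twoOptMove, card_filter_mem_insert_insert (by simp [hab, hac, hadD]) hbcD,
    card_filter_mem_insert_insert (by simp [hac, had]) (by simp)]
  simp only [Sym2.mem_iff]
  grind

lemma sum_twoOptMove (habC : s(a, b) ∈ C) (hcdC : s(c, d) ∈ C) (hab : a ≠ b) (hac : a ≠ c)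
    (had : a ≠ d) (hadD : s(a, d) ∉ C \ {s(a, b), s(c, d)})
    (hbcD : s(b, c) ∉ C \ {s(a, b), s(c, d)}) (len : Sym2 α → ℝ) :
    ∑ e ∈ twoOptMove C a b c d, len e + (len s(a, b) + len s(c, d)) =
      ∑ e ∈ C, len e + (len s(a, d) + len s(b, c)) := by
  conv_rhs => rw [← insert_insert_sdiff_pair habC hcdC]
  rw [twoOptMove, sum_insert (by simp [hab, hac, hadD]), sum_insert hbcD,
    sum_insert (by simp [hac, had]), sum_insert (by simp)]
  ring

end EdgeSets

open scoped Classical in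
lemma SimpleGraph.even_card_odd_degree_reachable {α : Type*} [Fintype α] (H : SimpleGraph α)
    [DecidableRel H.Adj] (u : α) : Even #{v | H.Reachable u v ∧ Odd (H.degree v)} := by
  set K : Set α := {v | H.Reachable u v}
  have hdeg (x : K) : (H.induce K).degree x = H.degree x :=
    degree_induce_of_neighborSet_subset fun w hw => Reachable.trans x.2 (Adj.reachable hw)
  have := (H.induce K).even_card_odd_degree_vertices
  simp only [hdeg] at this
  convert this using 1
  rw [← card_map (Function.Embedding.subtype _)]
  congr 1
  ext v
  simp only [mem_map, mem_filter, mem_univ, true_and, Function.Embedding.subtype_apply,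
    Subtype.exists, exists_and_right, exists_eq_right, K]
  exact exists_prop.symm

open scoped Classical in
lemma SimpleGraph.reachable_iff_not_reachable_of_odd_degree {α : Type*} [Fintype α]
    [DecidableEq α] (H : SimpleGraph α) [DecidableRel H.Adj] {a b c d : α}
    (hodd : ∀ v, Odd (H.degree v) ↔ v ∈ ({a, b, c, d} : Finset α)) (hab : ¬ H.Reachable a b)
    (hca : c ≠ a) (hda : d ≠ a) (hcd : c ≠ d) : H.Reachable a c ↔ ¬ H.Reachable a d := by
  have heven : Even #(({a, b, c, d} : Finset α).filter (H.Reachable a ·)) := by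
    convert H.even_card_odd_degree_reachable a using 2
    ext v
    simp [hodd, and_comm]
  rw [filter_insert, filter_insert, filter_insert, filter_singleton, if_pos (Reachable.refl a),
    if_neg hab] at heven
  by_cases hc : H.Reachable a c <;> by_cases hd : H.Reachable a d <;>
    simp [hc, hd, hcd, hca.symm, hda.symm, Nat.even_iff] at heven ⊢

lemma mem_edgeVerts {C : Finset (Sym2 V)} {v : V} : v ∈ edgeVerts C ↔ ∃ e ∈ C, v ∈ e := by
  simp [edgeVerts]

lemma edgeVerts_eq_of_card_filter_eq {C C' : Finset (Sym2 V)}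
    (h : ∀ v, #{e ∈ C' | v ∈ e} = #{e ∈ C | v ∈ e}) : edgeVerts C' = edgeVerts C := by
  ext v
  have := h v
  simp only [mem_edgeVerts, ← filter_nonempty_iff, ← card_pos]
  omega

lemma edgeVerts_twoOptMove {C : Finset (Sym2 V)} {a b c d : V} (habC : s(a, b) ∈ C)
    (hcdC : s(c, d) ∈ C) (hab : a ≠ b) (hac : a ≠ c) (had : a ≠ d) (hbc : b ≠ c) (hcd : c ≠ d)
    (hadD : s(a, d) ∉ C \ {s(a, b), s(c, d)}) (hbcD : s(b, c) ∉ C \ {s(a, b), s(c, d)}) :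
    edgeVerts (twoOptMove C a b c d) = edgeVerts C :=
  edgeVerts_eq_of_card_filter_eq
    (card_filter_mem_twoOptMove habC hcdC hab hac had hbc hcd hadD hbcD)

namespace IsTour

variable {G : SimpleGraph V} {C : Finset (Sym2 V)} {a b c d : V}

lemma not_isDiag (hC : IsTour G C) {e : Sym2 V} (he : e ∈ C) : ¬ e.IsDiag :=
  G.not_isDiag_of_mem_edgeSet (hC.1 he)

lemma isCycles (hC : IsTour G C) : (fromEdgeSet (C : Set (Sym2 V))).IsCycles := by
  intro v ⟨w, hw⟩
  rw [Set.ncard_eq_toFinset_card', Set.toFinset_card, card_neighborSet_eq_degree,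
    degree_fromEdgeSet fun e he => hC.not_isDiag he]
  exact hC.2.2 v (mem_edgeVerts.mpr ⟨_, ((fromEdgeSet_adj _).mp hw).1, Sym2.mem_mk_left _ _⟩)

lemma not_connIn_sdiff_pair (hC : IsTour G C) (habC : s(a, b) ∈ C) (hcdC : s(c, d) ∈ C)
    (hab : a ≠ b) (hca : c ≠ a) (hcb : c ≠ b) (hcd : c ≠ d) :
    ¬ ConnIn (C \ {s(a, b), s(c, d)}) a b := by
  rintro ⟨p⟩
  set D := C \ {s(a, b), s(c, d)}
  set H := fromEdgeSet (C : Set (Sym2 V))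
  have hle : fromEdgeSet (D : Set (Sym2 V)) ≤ H := fromEdgeSet_mono (by simp [D])
  set q := p.bypass.mapLe hle
  have hqD : ∀ e ∈ q.edges, e ∈ D := by
    intro e he
    rw [Walk.edges_mapLe_eq_edges] at he
    exact (edgeSet_fromEdgeSet _ ▸ p.bypass.edges_subset_edgeSet he).1
  have hba : H.Adj b a := (fromEdgeSet_adj _).mpr ⟨by simpa [Sym2.eq_swap] using habC, hab.symm⟩
  set γ := Walk.cons hba q
  have hγ : γ.IsCycle := (Walk.cons_isCycle_iff _ _).mpr
    ⟨(Walk.bypass_isPath p).mapLe hle, fun h => by simpa [D, Sym2.eq_swap] using hqD _ h⟩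
  have hclosed : ∀ v ∈ γ.toSubgraph.verts, ∀ w, H.Adj v w → γ.toSubgraph.Adj v w :=
    fun v hv w => (hγ.adj_toSubgraph_iff_of_isCycles hC.isCycles hv w).mpr
  have hc : c ∈ γ.toSubgraph.verts := by
    refine (hC.2.1 b ?_ c ?_).mem_subgraphVerts hclosed (by simp)
    · exact mem_edgeVerts.mpr ⟨_, habC, Sym2.mem_mk_right _ _⟩
    · exact mem_edgeVerts.mpr ⟨_, hcdC, Sym2.mem_mk_left _ _⟩
  have hcdγ : s(c, d) ∈ γ.edges :=
    (Walk.mem_edges_toSubgraph _).mp (hclosed c hc d ((fromEdgeSet_adj _).mpr ⟨hcdC, hcd⟩))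
  rw [Walk.edges_cons, List.mem_cons] at hcdγ
  rcases hcdγ with h | h
  · rcases Sym2.eq_iff.mp h with ⟨h, -⟩ | ⟨h, -⟩
    · exact hcb h
    · exact hca h
  · simpa [D] using hqD _ h

lemma odd_card_filter_sdiff_pair_iff (hC : IsTour G C) (habC : s(a, b) ∈ C)
    (hcdC : s(c, d) ∈ C) (hac : a ≠ c) (had : a ≠ d) (hbc : b ≠ c) (hbd : b ≠ d) (v : V) :
    Odd #{e ∈ C \ {s(a, b), s(c, d)} | v ∈ e} ↔ v ∈ ({a, b, c, d} : Finset V) := by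
  have hdeg := card_filter_mem_insert_insert (D := C \ {s(a, b), s(c, d)}) (e := s(a, b))
    (f := s(c, d)) (by simp [hac, had]) (by simp) v
  rw [insert_insert_sdiff_pair habC hcdC] at hdeg
  have h20 : #{e ∈ C | v ∈ e} = 2 ∨ #{e ∈ C | v ∈ e} = 0 := by
    by_cases hv : v ∈ edgeVerts C
    · exact Or.inl (hC.2.2 v hv)
    · exact Or.inr (card_eq_zero.mpr (filter_eq_empty_iff.mpr
        fun e he hve => hv (mem_edgeVerts.mpr ⟨e, he, hve⟩)))
  simp only [Sym2.mem_iff, mem_insert, mem_singleton] at hdeg ⊢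
  grind

lemma connIn_sdiff_pair_iff (hC : IsTour G C) (habC : s(a, b) ∈ C) (hcdC : s(c, d) ∈ C)
    (hab : a ≠ b) (hac : a ≠ c) (had : a ≠ d) (hbc : b ≠ c) (hbd : b ≠ d) (hcd : c ≠ d) :
    ConnIn (C \ {s(a, b), s(c, d)}) a c ↔ ¬ ConnIn (C \ {s(a, b), s(c, d)}) a d := by
  refine reachable_iff_not_reachable_of_odd_degree _ (fun v => ?_)
    (hC.not_connIn_sdiff_pair habC hcdC hab hac.symm hbc.symm hcd) hac.symm had.symm hcd
  rw [degree_fromEdgeSet fun e he => hC.not_isDiag (mem_sdiff.mp he).1]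
  exact hC.odd_card_filter_sdiff_pair_iff habC hcdC hac had hbc hbd v

lemma notMem_sdiff_pair_of_connIn (hC : IsTour G C) (habC : s(a, b) ∈ C) (hcdC : s(c, d) ∈ C)
    (hab : a ≠ b) (hac : a ≠ c) (had : a ≠ d) (hbc : b ≠ c) (hbd : b ≠ d) (hcd : c ≠ d)
    (hacD : ConnIn (C \ {s(a, b), s(c, d)}) a c) :
    s(a, d) ∉ C \ {s(a, b), s(c, d)} ∧ s(b, c) ∉ C \ {s(a, b), s(c, d)} :=
  ⟨fun h => (hC.connIn_sdiff_pair_iff habC hcdC hab hac had hbc hbd hcd).mp hacD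
      (connIn_of_mem h had),
    fun h => hC.not_connIn_sdiff_pair habC hcdC hab hac.symm hbc.symm hcd
      (hacD.trans (connIn_of_mem h hbc).symm)⟩

lemma connIn_twoOptMove (hC : IsTour G C) (had : a ≠ d) (hbc : b ≠ c)
    (hacD : ConnIn (C \ {s(a, b), s(c, d)}) a c) {u w : V} (huw : ConnIn C u w) :
    ConnIn (twoOptMove C a b c d) u w := by
  have hDC' : C \ {s(a, b), s(c, d)} ⊆ twoOptMove C a b c d :=
    (subset_insert _ _).trans (subset_insert _ _)
  have hac' : ConnIn (twoOptMove C a b c d) a c := hacD.of_forall_mem fun x y h =>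
    connIn_of_mem (hDC' h) fun hxy => hC.not_isDiag (mem_sdiff.mp h).1 (by simp [hxy])
  have had' : ConnIn (twoOptMove C a b c d) a d := connIn_of_mem (by simp [twoOptMove]) had
  have hbc' : ConnIn (twoOptMove C a b c d) b c := connIn_of_mem (by simp [twoOptMove]) hbc
  refine huw.of_forall_mem fun x y hxy => ?_
  by_cases hxyD : s(x, y) ∈ C \ {s(a, b), s(c, d)}
  · exact connIn_of_mem (hDC' hxyD) fun h => hC.not_isDiag hxy (by simp [h])
  have : s(x, y) = s(a, b) ∨ s(x, y) = s(c, d) := by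
    simpa only [mem_sdiff, hxy, true_and, mem_insert, mem_singleton, not_not] using hxyD
  rcases this with h | h <;> rcases Sym2.eq_iff.mp h with ⟨rfl, rfl⟩ | ⟨rfl, rfl⟩
  · exact hac'.trans hbc'.symm
  · exact hbc'.trans hac'.symm
  · exact hac'.symm.trans had'
  · exact had'.symm.trans hac'

lemma isTour_twoOptMove (hC : IsTour G C) (habC : s(a, b) ∈ C) (hcdC : s(c, d) ∈ C)
    (hadG : s(a, d) ∈ G.edgeSet) (hbcG : s(b, c) ∈ G.edgeSet)
    (hab : a ≠ b) (hac : a ≠ c) (had : a ≠ d) (hbc : b ≠ c) (hbd : b ≠ d) (hcd : c ≠ d)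
    (hacD : ConnIn (C \ {s(a, b), s(c, d)}) a c) : IsTour G (twoOptMove C a b c d) := by
  obtain ⟨hadD, hbcD⟩ :=
    hC.notMem_sdiff_pair_of_connIn habC hcdC hab hac had hbc hbd hcd hacD
  have hdeg := card_filter_mem_twoOptMove habC hcdC hab hac had hbc hcd hadD hbcD
  have hV := edgeVerts_twoOptMove habC hcdC hab hac had hbc hcd hadD hbcD
  refine ⟨?_, fun u hu w hw => ?_, fun v hv => ?_⟩
  · intro e he
    simp only [twoOptMove, coe_insert, Set.mem_insert_iff, mem_coe] at he
    rcases he with rfl | rfl | he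
    exacts [hadG, hbcG, hC.1 (mem_sdiff.mp he).1]
  · rw [hV] at hu hw
    exact hC.connIn_twoOptMove had hbc hacD (hC.2.1 u hu w hw)
  · rw [hdeg]
    exact hC.2.2 v (hV ▸ hv)

lemma exists_cheaper_twoOptMove (hC : IsTour G C) (habC : s(a, b) ∈ C) (hcdC : s(c, d) ∈ C)
    (hadG : s(a, d) ∈ G.edgeSet) (hbcG : s(b, c) ∈ G.edgeSet)
    (hab : a ≠ b) (hac : a ≠ c) (had : a ≠ d) (hbc : b ≠ c) (hbd : b ≠ d) (hcd : c ≠ d)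
    (hacD : ConnIn (C \ {s(a, b), s(c, d)}) a c) {len : Sym2 V → ℝ}
    (hcost : len s(b, c) + len s(a, d) < len s(a, b) + len s(c, d)) {S : Finset (Sym2 V)}
    (hS : {s(a, b), s(c, d), s(a, d), s(b, c)} ⊆ S) :
    ∃ C' : Finset (Sym2 V), IsTour G C' ∧ edgeVerts C' = edgeVerts C ∧
      ∑ e ∈ C', len e < ∑ e ∈ C, len e ∧ ¬ (s(a, b) ∈ C' ∧ s(c, d) ∈ C') ∧ C \ S = C' \ S := by
  obtain ⟨hadD, hbcD⟩ :=
    hC.notMem_sdiff_pair_of_connIn habC hcdC hab hac had hbc hbd hcd hacD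
  refine ⟨twoOptMove C a b c d,
    hC.isTour_twoOptMove habC hcdC hadG hbcG hab hac had hbc hbd hcd hacD,
    edgeVerts_twoOptMove habC hcdC hab hac had hbc hcd hadD hbcD, ?_, ?_, ?_⟩
  · linarith [sum_twoOptMove habC hcdC hab hac had hadD hbcD len]
  · simp [twoOptMove, hab, hac, hbd, hab.symm]
  · simp only [insert_subset_iff, singleton_subset_iff] at hS
    conv_lhs => rw [← insert_insert_sdiff_pair habC hcdC]
    rw [twoOptMove, insert_sdiff_of_mem _ hS.1, insert_sdiff_of_mem _ hS.2.1,
      insert_sdiff_of_mem _ hS.2.2.1, insert_sdiff_of_mem _ hS.2.2.2]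

end IsTour

theorem tour_two_opt_improvement_general
    (G : SimpleGraph V) (len : Sym2 V → ℝ)
    (C : Finset (Sym2 V)) (hC : IsTour G C)
    (v₁ v₂ v₃ v₄ : V)
    (h12 : v₁ ≠ v₂) (h13 : v₁ ≠ v₃) (h14 : v₁ ≠ v₄)
    (h23 : v₂ ≠ v₃) (h24 : v₂ ≠ v₄) (h34 : v₃ ≠ v₄)
    (hE13 : s(v₁, v₃) ∈ G.edgeSet)
    (hE14 : s(v₁, v₄) ∈ G.edgeSet) (hE23 : s(v₂, v₃) ∈ G.edgeSet)
    (hE24 : s(v₂, v₄) ∈ G.edgeSet)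
    (hc1 : len s(v₁, v₃) + len s(v₂, v₄) < len s(v₁, v₂) + len s(v₃, v₄))
    (hc2 : len s(v₂, v₃) + len s(v₁, v₄) < len s(v₁, v₂) + len s(v₃, v₄))
    (he12 : s(v₁, v₂) ∈ C) (he34 : s(v₃, v₄) ∈ C) :
    ∃ C' : Finset (Sym2 V), IsTour G C' ∧
      edgeVerts C' = edgeVerts C ∧
      (∑ e ∈ C', len e) < (∑ e ∈ C, len e) ∧
      ¬ (s(v₁, v₂) ∈ C' ∧ s(v₃, v₄) ∈ C') ∧
      C \ {s(v₁, v₂), s(v₁, v₃), s(v₁, v₄), s(v₂, v₃), s(v₂, v₄), s(v₃, v₄)}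
        = C' \ {s(v₁, v₂), s(v₁, v₃), s(v₁, v₄), s(v₂, v₃), s(v₂, v₄), s(v₃, v₄)} := by
  by_cases h13D : ConnIn (C \ {s(v₁, v₂), s(v₃, v₄)}) v₁ v₃
  · exact hC.exists_cheaper_twoOptMove he12 he34 hE14 hE23 h12 h13 h14 h23 h24 h34 h13D hc2
      (by simp [insert_subset_iff])
  · have h14D := (hC.connIn_sdiff_pair_iff he12 he34 h12 h13 h14 h23 h24 h34).not_left.mp h13D
    rw [Sym2.eq_swap (a := v₃)] at he34 h14D hc1 ⊢
    exact hC.exists_cheaper_twoOptMove he12 he34 hE13 hE24 h12 h14 h13 h24 h23 h34.symm h14D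
      (by linarith) (by simp [insert_subset_iff])

/-- 2-OPT improvement: if the four distinct vertices v₁, v₂, v₃, v₄ of a tour C span all
six edges in G, the pair {e₁₂, e₃₄} is strictly more expensive than both other opposite
pairs, and e₁₂, e₃₄ ∈ C, then there is a strictly cheaper tour C'\'' on the same vertices,
not containing both e₁₂ and e₃₄, agreeing with C outside the six edges. -/
theorem tour_two_opt_improvement
    (G : SimpleGraph V) (len : Sym2 V → ℝ) (hlen : ∀ e ∈ G.edgeSet, 0 ≤ len e)
    (C : Finset (Sym2 V)) (hC : IsTour G C)
    (v₁ v₂ v₃ v₄ : V)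
    (h12 : v₁ ≠ v₂) (h13 : v₁ ≠ v₃) (h14 : v₁ ≠ v₄)
    (h23 : v₂ ≠ v₃) (h24 : v₂ ≠ v₄) (h34 : v₃ ≠ v₄)
    (hv₁ : v₁ ∈ edgeVerts C) (hv₂ : v₂ ∈ edgeVerts C)
    (hv₃ : v₃ ∈ edgeVerts C) (hv₄ : v₄ ∈ edgeVerts C)
    (hE12 : s(v₁, v₂) ∈ G.edgeSet) (hE13 : s(v₁, v₃) ∈ G.edgeSet)
    (hE14 : s(v₁, v₄) ∈ G.edgeSet) (hE23 : s(v₂, v₃) ∈ G.edgeSet)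
    (hE24 : s(v₂, v₄) ∈ G.edgeSet) (hE34 : s(v₃, v₄) ∈ G.edgeSet)
    (hc1 : len s(v₁, v₃) + len s(v₂, v₄) < len s(v₁, v₂) + len s(v₃, v₄))
    (hc2 : len s(v₂, v₃) + len s(v₁, v₄) < len s(v₁, v₂) + len s(v₃, v₄))
    (he12 : s(v₁, v₂) ∈ C) (he34 : s(v₃, v₄) ∈ C) :
    ∃ C' : Finset (Sym2 V), IsTour G C' ∧
      edgeVerts C' = edgeVerts C ∧
      (∑ e ∈ C', len e) < (∑ e ∈ C, len e) ∧
      ¬ (s(v₁, v₂) ∈ C' ∧ s(v₃, v₄) ∈ C') ∧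
      C \ {s(v₁, v₂), s(v₁, v₃), s(v₁, v₄), s(v₂, v₃), s(v₂, v₄), s(v₃, v₄)}
        = C' \ {s(v₁, v₂), s(v₁, v₃), s(v₁, v₄), s(v₂, v₃), s(v₂, v₄), s(v₃, v₄)} :=
  tour_two_opt_improvement_general G len C hC v₁ v₂ v₃ v₄ h12 h13 h14 h23 h24 h34 hE13 hE14 hE23
    hE24 hc1 hc2 he12 he34
end
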